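/- There exist 3 disjoint families 𝓘₁, 𝓘₂, 𝓘₃ of dyadic intervals in ℝ whose union is the set of all dyadic intervals, such that for each j, if I₁, I₂ ∈ 𝓘ⱼ then 3I₁ and 3I₂ are either disjoint or one is contained in the other. -/

import Mathlib

/-- A dyadic interval in `ℝ`: an open interval `(j/2^k, (j+1)/2^k)` for integers `j, k`. -/
def IsDyadicInterval (I : Set ℝ) : Prop :=
  ∃ j k : ℤ, I = Set.Ioo ((j : ℝ) / 2 ^ k) (((j : ℝ) + 1) / 2 ^ k)

/-- For a bounded interval `I`, `dilateSet r I` is the open interval with the same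
center and `r` times the length. -/
noncomputable def dilateSet (r : ℝ) (I : Set ℝ) : Set ℝ :=
  Set.Ioo ((sInf I + sSup I) / 2 - r * (sSup I - sInf I) / 2)
    ((sInf I + sSup I) / 2 + r * (sSup I - sInf I) / 2)

/-!
Colour the dyadic interval `I = (j/2^k, (j+1)/2^k)` by the residue modulo `3` of the left
endpoint `(j-1)/2^k` of `3I`, which makes sense because `2` is invertible modulo `3`.
Let `I` and `I'` have the same colour, with `|I'| = 2^(-k') ≤ |I|`. Measured on the grid
`2^(-k') ℤ`, both endpoints of `3I` and the left endpoint `c` of `3I'` are integers congruent to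
`c` modulo `3`, while `3I' = (c, c + 3)`. So no endpoint of `3I` lies inside `3I'`, and `3I'` is
either disjoint from `3I` or contained in it.
-/

open Set

def dyadicIoo (j k : ℤ) : Set ℝ := Ioo ((j : ℝ) / 2 ^ k) (((j : ℝ) + 1) / 2 ^ k)

lemma dyadicIoo_left_lt_right (j k : ℤ) : (j : ℝ) / 2 ^ k < ((j : ℝ) + 1) / 2 ^ k :=
  div_lt_div_of_pos_right (lt_add_one _) (zpow_pos two_pos k)

lemma dyadicIoo_injective : Function.Injective2 dyadicIoo := by
  intro j j' k k' h
  have hleft : (j : ℝ) / 2 ^ k = j' / 2 ^ k' := by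
    rw [← csInf_Ioo (dyadicIoo_left_lt_right j k), ← csInf_Ioo (dyadicIoo_left_lt_right j' k')]
    exact congrArg sInf h
  have hright : ((j : ℝ) + 1) / 2 ^ k = ((j' : ℝ) + 1) / 2 ^ k' := by
    rw [← csSup_Ioo (dyadicIoo_left_lt_right j k), ← csSup_Ioo (dyadicIoo_left_lt_right j' k')]
    exact congrArg sSup h
  have hlength : ((2 : ℝ) ^ k)⁻¹ = ((2 : ℝ) ^ k')⁻¹ := by
    calc ((2 : ℝ) ^ k)⁻¹ = ((j : ℝ) + 1) / 2 ^ k - j / 2 ^ k := by ring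
      _ = ((j' : ℝ) + 1) / 2 ^ k' - j' / 2 ^ k' := by rw [hleft, hright]
      _ = ((2 : ℝ) ^ k')⁻¹ := by ring
  obtain rfl : k = k' := zpow_right_injective₀ two_pos (by norm_num) (inv_injective hlength)
  refine ⟨?_, rfl⟩
  exact_mod_cast (div_left_inj' (zpow_ne_zero k two_ne_zero)).1 hleft

lemma dilateSet_three_dyadicIoo (j k : ℤ) :
    dilateSet 3 (dyadicIoo j k) = Ioo (((j : ℝ) - 1) / 2 ^ k) (((j : ℝ) + 2) / 2 ^ k) := by
  rw [dyadicIoo, dilateSet, csInf_Ioo (dyadicIoo_left_lt_right j k),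
    csSup_Ioo (dyadicIoo_left_lt_right j k)]
  congr 1 <;> ring

def dyadicClass (j k : ℤ) : ZMod 3 := ((j - 1 : ℤ) : ZMod 3) / 2 ^ k

lemma Ioo_disjoint_or_subset_of_intCast_eq {D : ℝ} (hD : 0 < D) {a b c : ℤ}
    (ha : (a : ZMod 3) = c) (hb : (b : ZMod 3) = c) :
    Disjoint (Ioo ((a : ℝ) / D) ((b : ℝ) / D)) (Ioo ((c : ℝ) / D) (((c : ℝ) + 3) / D)) ∨
      Ioo ((c : ℝ) / D) (((c : ℝ) + 3) / D) ⊆ Ioo ((a : ℝ) / D) ((b : ℝ) / D) := by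
  rw [ZMod.intCast_eq_intCast_iff' _ _ 3] at ha hb
  have hdiv : ∀ m n : ℤ, m ≤ n → (m : ℝ) / D ≤ n / D := fun m n hmn =>
    div_le_div_of_nonneg_right (by exact_mod_cast hmn) hD.le
  have hc3 : ((c : ℝ) + 3) / D = ((c + 3 : ℤ) : ℝ) / D := by push_cast; rfl
  rw [hc3, Ioo_disjoint_Ioo]
  -- `a` and `b` are congruent to `c` modulo `3`, so neither lies strictly between `c` and `c + 3`
  rcases (by omega : c + 3 ≤ a ∨ b ≤ c ∨ (a ≤ c ∧ c + 3 ≤ b)) with h | h | ⟨hac, hcb⟩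
  · exact Or.inl (min_le_of_right_le (le_max_of_le_left (hdiv _ _ h)))
  · exact Or.inl (min_le_of_left_le (le_max_of_le_right (hdiv _ _ h)))
  · exact Or.inr (Ioo_subset_Ioo (hdiv _ _ hac) (hdiv _ _ hcb))

lemma dilateSet_three_dyadicIoo_disjoint_or_subset {j j' k : ℤ} {d : ℕ}
    (h : dyadicClass j k = dyadicClass j' (k + d)) :
    Disjoint (dilateSet 3 (dyadicIoo j k)) (dilateSet 3 (dyadicIoo j' (k + d))) ∨
      dilateSet 3 (dyadicIoo j' (k + d)) ⊆ dilateSet 3 (dyadicIoo j k) := by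
  have hpow : (2 : ℝ) ^ (k + d) = 2 ^ k * 2 ^ d := by
    rw [zpow_add₀ two_ne_zero, zpow_natCast]
  have hleft : ((j : ℝ) - 1) / 2 ^ k = ((2 ^ d * (j - 1) : ℤ) : ℝ) / 2 ^ (k + d) := by
    rw [hpow]; push_cast; field_simp
  have hright : ((j : ℝ) + 2) / 2 ^ k = ((2 ^ d * (j - 1) + 3 * 2 ^ d : ℤ) : ℝ) / 2 ^ (k + d) := by
    rw [hpow]; push_cast; field_simp; ring
  have hleft' : ((j' : ℝ) - 1) / 2 ^ (k + d) = ((j' - 1 : ℤ) : ℝ) / 2 ^ (k + d) := by push_cast; rfl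
  have hright' : ((j' : ℝ) + 2) / 2 ^ (k + d) = (((j' - 1 : ℤ) : ℝ) + 3) / 2 ^ (k + d) := by
    push_cast; ring
  have hclass : ((2 ^ d * (j - 1) : ℤ) : ZMod 3) = ((j' - 1 : ℤ) : ZMod 3) := by
    have h2 : (2 : ZMod 3) ≠ 0 := by decide
    rw [dyadicClass, dyadicClass, zpow_add₀ h2, zpow_natCast] at h
    field_simp at h
    rw [← h, Int.cast_mul, Int.cast_pow, Int.cast_ofNat, mul_comm]
  rw [dilateSet_three_dyadicIoo, dilateSet_three_dyadicIoo, hleft, hright, hleft', hright']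
  refine Ioo_disjoint_or_subset_of_intCast_eq (zpow_pos two_pos _) hclass ?_
  rw [Int.cast_add, hclass, Int.cast_mul, show ((3 : ℤ) : ZMod 3) = 0 by decide, zero_mul,
    add_zero]

lemma dilateSet_three_dyadicIoo_trichotomy {j j' k k' : ℤ}
    (h : dyadicClass j k = dyadicClass j' k') :
    Disjoint (dilateSet 3 (dyadicIoo j k)) (dilateSet 3 (dyadicIoo j' k')) ∨
      dilateSet 3 (dyadicIoo j k) ⊆ dilateSet 3 (dyadicIoo j' k') ∨
      dilateSet 3 (dyadicIoo j' k') ⊆ dilateSet 3 (dyadicIoo j k) := by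
  rcases le_total k k' with hk | hk
  · obtain ⟨d, rfl⟩ := Int.le.dest hk
    rcases dilateSet_three_dyadicIoo_disjoint_or_subset h with h | h
    exacts [Or.inl h, Or.inr (Or.inr h)]
  · obtain ⟨d, rfl⟩ := Int.le.dest hk
    rcases dilateSet_three_dyadicIoo_disjoint_or_subset h.symm with h | h
    exacts [Or.inl h.symm, Or.inr (Or.inl h)]

/-- There exist `3` disjoint families `𝓘₁, 𝓘₂, 𝓘₃` of dyadic intervals in `ℝ` whose union
is the set of all dyadic intervals, such that for each `j`, if `I₁, I₂ ∈ 𝓘ⱼ` then `3I₁`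
and `3I₂` are either disjoint or one is contained in the other. -/
theorem exists_three_families_of_dyadic_intervals :
    ∃ F : Fin 3 → Set (Set ℝ),
      (∀ i j : Fin 3, i ≠ j → Disjoint (F i) (F j)) ∧
      (⋃ i, F i) = {I | IsDyadicInterval I} ∧
      ∀ i : Fin 3, ∀ I₁ ∈ F i, ∀ I₂ ∈ F i,
        Disjoint (dilateSet 3 I₁) (dilateSet 3 I₂) ∨
        dilateSet 3 I₁ ⊆ dilateSet 3 I₂ ∨ dilateSet 3 I₂ ⊆ dilateSet 3 I₁ := by
  -- `ZMod 3` is `Fin 3` by definition, so the classes index the families directly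
  refine ⟨fun i => {I | ∃ j k, I = dyadicIoo j k ∧ dyadicClass j k = i}, ?_, ?_, ?_⟩
  · intro i i' hne
    refine disjoint_left.2 ?_
    rintro _ ⟨j, k, rfl, rfl⟩ ⟨j', k', h, rfl⟩
    obtain ⟨rfl, rfl⟩ := dyadicIoo_injective h
    exact hne rfl
  · ext I
    simp only [mem_iUnion, mem_ofPred_eq, IsDyadicInterval, dyadicIoo]
    exact ⟨fun ⟨_, j, k, hI, _⟩ => ⟨j, k, hI⟩, fun ⟨j, k, hI⟩ => ⟨dyadicClass j k, j, k, hI, rfl⟩⟩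
  · rintro i _ ⟨j, k, rfl, hc⟩ _ ⟨j', k', rfl, hc'⟩
    exact dilateSet_three_dyadicIoo_trichotomy (hc.trans hc'.symm)
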